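/- arXiv:1209.2932 — 3 statements merged into one kernel-verified Lean document; each statement's English description precedes it below -/
import Mathlib

section
/- Under the stated geometric assumptions, the configuration error function admits the matrix trace representation Ψ₁₂ = kᵅ + kᵝ − tr(R₂ᵀ K₁₂ R₁ Q^d₂₁), where K₁₂ = kᵅ s₁₂ s₁₂ᵀ + (kᵝ/‖s₁₂₃‖²) s₁₂₃ s₁₂₃ᵀ. -/
/-!
A rotation commutes with the cross product (its adjugate is its transpose) and preserves norms,
so `b₁₂₃ = R₁ᵀ s₁₂₃`, `b₂₁₃ = R₂ᵀ s₂₁₃` and `a₁₂ = ‖s₂₁₃‖ ‖s₁₂₃‖`. Since `s₂₁ = -s₁₂` and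
`s₂₁₃ = -(‖s₂₁₃‖ / ‖s₁₂₃‖) s₁₂₃`, both terms of `Ψ₁₂` take the form `k - k' (R₂ᵀ v) · Q (R₁ᵀ v)`,
and `(R₂ᵀ u) · Q (R₁ᵀ w) = tr (R₂ᵀ u wᵀ R₁ Qᵀ)`.
-/

noncomputable section
open Matrix

/-- Vectors in ℝ³ with the Euclidean norm. -/
abbrev V3 : Type := EuclideanSpace ℝ (Fin 3)

/-- Real 3×3 matrices. -/
abbrev M3 : Type := Matrix (Fin 3) (Fin 3) ℝ

/-- The special orthogonal group SO(3): RᵀR = I and det R = 1. -/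
def SO3 (R : M3) : Prop := Rᵀ * R = 1 ∧ R.det = 1

/-- Action of a matrix on a vector. -/
def matVec (A : M3) (v : V3) : V3 := WithLp.toLp 2 (A.mulVec v)

/-- Cross product on ℝ³. -/
def cross3 (u v : V3) : V3 :=
  WithLp.toLp 2 ![u 1 * v 2 - u 2 * v 1, u 2 * v 0 - u 0 * v 2, u 0 * v 1 - u 1 * v 0]

/-- The hat map: x̂ y = x × y. -/
def hat (x : V3) : M3 :=
  !![0, -x 2, x 1; x 2, 0, -x 0; -x 1, x 0, 0]

/-- The vee map, inverse of the hat map on skew-symmetric matrices. -/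
def vee (A : M3) : V3 := WithLp.toLp 2 ![A 2 1, A 0 2, A 1 0]

/-- Dot product on ℝ³. -/
def dot3 (u v : V3) : ℝ := u 0 * v 0 + u 1 * v 1 + u 2 * v 2

attribute [local instance] Matrix.normedAddCommGroup Matrix.normedSpace

lemma matVec_neg (A : M3) (v : V3) : matVec A (-v) = -matVec A v := by
  ext i; simp [matVec, mulVec_neg]

lemma matVec_smul (A : M3) (c : ℝ) (v : V3) : matVec A (c • v) = c • matVec A v := by
  ext i; simp [matVec, mulVec_smul]

lemma matVec_matVec (A B : M3) (v : V3) : matVec A (matVec B v) = matVec (A * B) v := by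
  ext i; simp [matVec, mulVec_mulVec]

lemma matVec_one (v : V3) : matVec 1 v = v := by
  ext i; simp [matVec]

lemma dot3_neg_left (u w : V3) : dot3 (-u) w = -dot3 u w := by
  simp only [dot3, PiLp.neg_apply]; ring

lemma dot3_smul_left (c : ℝ) (u w : V3) : dot3 (c • u) w = c * dot3 u w := by
  simp only [dot3, PiLp.smul_apply, smul_eq_mul]; ring

lemma dot3_matVec_left (A : M3) (u w : V3) : dot3 (matVec A u) w = dot3 u (matVec Aᵀ w) := by
  simp only [dot3, matVec, PiLp.toLp_apply, mulVec, dotProduct, Fin.sum_univ_three, transpose_apply]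
  ring

lemma norm_sq_eq_dot3 (v : V3) : ‖v‖ ^ 2 = dot3 v v := by
  simp only [EuclideanSpace.norm_sq_eq, Fin.sum_univ_three, Real.norm_eq_abs, sq_abs, dot3]
  ring

lemma norm_matVec_of_transpose_mul_self {R : M3} (hR : Rᵀ * R = 1) (v : V3) :
    ‖matVec R v‖ = ‖v‖ := by
  have hsq : ‖matVec R v‖ ^ 2 = ‖v‖ ^ 2 := by
    rw [norm_sq_eq_dot3, norm_sq_eq_dot3, dot3_matVec_left, matVec_matVec, hR, matVec_one]
  exact (sq_eq_sq₀ (norm_nonneg _) (norm_nonneg _)).mp hsq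

lemma cross3_matVec (A : M3) (u v : V3) :
    cross3 (matVec A u) (matVec A v) = matVec A.adjugateᵀ (cross3 u v) := by
  ext i
  fin_cases i <;>
    simp [cross3, matVec, mulVec, dotProduct, Fin.sum_univ_three, adjugate_fin_three] <;> ring

namespace SO3

variable {R : M3}

lemma transpose (hR : SO3 R) : SO3 Rᵀ :=
  ⟨by rw [transpose_transpose]; exact mul_eq_one_comm.mp hR.1, by rw [det_transpose]; exact hR.2⟩

lemma adjugate_eq (hR : SO3 R) : R.adjugate = Rᵀ :=
  calc R.adjugate = Rᵀ * R * R.adjugate := by rw [hR.1, one_mul]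
    _ = Rᵀ := by rw [Matrix.mul_assoc, mul_adjugate, hR.2, one_smul, mul_one]

lemma cross3_matVec (hR : SO3 R) (u v : V3) :
    cross3 (matVec R u) (matVec R v) = matVec R (cross3 u v) := by
  rw [_root_.cross3_matVec, hR.adjugate_eq, transpose_transpose]

end SO3

lemma trace_mul_vecMulVec_mul (A B Q : M3) (u w : V3) :
    trace (Aᵀ * vecMulVec u w * B * Qᵀ) = dot3 (matVec Aᵀ u) (matVec Q (matVec Bᵀ w)) := by
  simp only [trace, diag, mul_apply, vecMulVec_apply, dot3, matVec, PiLp.toLp_apply, mulVec,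
    dotProduct, transpose_apply, Fin.sum_univ_three]
  ring

lemma eq_neg_smul_of_normalize_eq_neg {E : Type*} [NormedAddCommGroup E] [NormedSpace ℝ E]
    {x y : E} (h : ‖y‖⁻¹ • y = -(‖x‖⁻¹ • x)) : y = -(‖y‖ / ‖x‖) • x := by
  rcases eq_or_ne y 0 with rfl | hy
  · simp
  · calc y = ‖y‖ • (‖y‖⁻¹ • y) := by rw [smul_inv_smul₀ (norm_ne_zero_iff.mpr hy)]
      _ = -(‖y‖ / ‖x‖) • x := by rw [h, smul_neg, smul_smul, neg_smul, div_eq_mul_inv]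

theorem error_function_trace_form_general
    (s₁₂ s₁₃ s₂₁ s₂₃ : V3)
    (hopp : s₁₂ = -s₂₁)
    (s₁₂₃ s₂₁₃ : V3) (hs₁₂₃ : s₁₂₃ = cross3 s₁₂ s₁₃) (hs₂₁₃ : s₂₁₃ = cross3 s₂₁ s₂₃)
    (h₁ : s₁₂₃ ≠ 0) (h₂ : s₂₁₃ ≠ 0)
    (hnormal : ‖s₂₁₃‖⁻¹ • s₂₁₃ = -(‖s₁₂₃‖⁻¹ • s₁₂₃))
    (R₁ R₂ : M3) (hR₁ : SO3 R₁) (hR₂ : SO3 R₂)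
    (b₁₂ b₁₃ b₂₁ b₂₃ b₁₂₃ b₂₁₃ : V3)
    (hb₁₂ : b₁₂ = matVec R₁ᵀ s₁₂) (hb₁₃ : b₁₃ = matVec R₁ᵀ s₁₃)
    (hb₂₁ : b₂₁ = matVec R₂ᵀ s₂₁) (hb₂₃ : b₂₃ = matVec R₂ᵀ s₂₃)
    (hb₁₂₃ : b₁₂₃ = cross3 b₁₂ b₁₃) (hb₂₁₃ : b₂₁₃ = cross3 b₂₁ b₂₃)
    (a₁₂ : ℝ) (ha₁₂ : a₁₂ = ‖b₂₁₃‖ * ‖b₁₂₃‖)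
    (Qd₁₂ Qd₂₁ : M3) (hQd₂₁ : Qd₂₁ = Qd₁₂ᵀ)
    (kα kβ : ℝ)
    (Ψ : ℝ)
    (hΨ : Ψ = kα * (1 + dot3 b₂₁ (matVec Qd₁₂ b₁₂))
        + kβ * (1 + a₁₂⁻¹ * dot3 b₂₁₃ (matVec Qd₁₂ b₁₂₃)))
    (K : M3)
    (hK : K = kα • vecMulVec s₁₂ s₁₂ + (kβ / ‖s₁₂₃‖ ^ 2) • vecMulVec s₁₂₃ s₁₂₃) :
    Ψ = kα + kβ - Matrix.trace (R₂ᵀ * K * R₁ * Qd₂₁) := by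
  have hb₁₂₃' : b₁₂₃ = matVec R₁ᵀ s₁₂₃ := by
    rw [hb₁₂₃, hb₁₂, hb₁₃, hs₁₂₃, hR₁.transpose.cross3_matVec]
  have hb₂₁₃' : b₂₁₃ = matVec R₂ᵀ s₂₁₃ := by
    rw [hb₂₁₃, hb₂₁, hb₂₃, hs₂₁₃, hR₂.transpose.cross3_matVec]
  have ha : a₁₂ = ‖s₂₁₃‖ * ‖s₁₂₃‖ := by
    rw [ha₁₂, hb₁₂₃', hb₂₁₃', norm_matVec_of_transpose_mul_self hR₁.transpose.1,
      norm_matVec_of_transpose_mul_self hR₂.transpose.1]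
  have hn : ‖s₁₂₃‖ ≠ 0 := norm_ne_zero_iff.mpr h₁
  have hm : ‖s₂₁₃‖ ≠ 0 := norm_ne_zero_iff.mpr h₂
  have hb₂₁₃_eq_smul : b₂₁₃ = -(‖s₂₁₃‖ / ‖s₁₂₃‖) • matVec R₂ᵀ s₁₂₃ := by
    rw [hb₂₁₃', ← matVec_smul, ← eq_neg_smul_of_normalize_eq_neg hnormal]
  rw [hΨ, ha, hb₂₁, hb₁₂, hb₂₁₃_eq_smul, hb₁₂₃', neg_eq_iff_eq_neg.mp hopp.symm, hK, hQd₂₁]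
  simp only [Matrix.mul_add, Matrix.add_mul, trace_add, Matrix.mul_smul, Matrix.smul_mul,
    trace_smul, trace_mul_vecMulVec_mul, matVec_neg, dot3_neg_left,
    dot3_smul_left, smul_eq_mul]
  field_simp
  ring

/-- matrix trace representation of the configuration error function. -/
theorem error_function_trace_form
    (s₁₂ s₁₃ s₂₁ s₂₃ : V3)
    (hs₁₂ : ‖s₁₂‖ = 1) (hs₁₃ : ‖s₁₃‖ = 1) (hs₂₁ : ‖s₂₁‖ = 1) (hs₂₃ : ‖s₂₃‖ = 1)
    (hopp : s₁₂ = -s₂₁)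
    (s₁₂₃ s₂₁₃ : V3) (hs₁₂₃ : s₁₂₃ = cross3 s₁₂ s₁₃) (hs₂₁₃ : s₂₁₃ = cross3 s₂₁ s₂₃)
    (h₁ : s₁₂₃ ≠ 0) (h₂ : s₂₁₃ ≠ 0)
    (hnormal : ‖s₂₁₃‖⁻¹ • s₂₁₃ = -(‖s₁₂₃‖⁻¹ • s₁₂₃))
    (R₁ R₂ : M3) (hR₁ : SO3 R₁) (hR₂ : SO3 R₂)
    (b₁₂ b₁₃ b₂₁ b₂₃ b₁₂₃ b₂₁₃ : V3)
    (hb₁₂ : b₁₂ = matVec R₁ᵀ s₁₂) (hb₁₃ : b₁₃ = matVec R₁ᵀ s₁₃)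
    (hb₂₁ : b₂₁ = matVec R₂ᵀ s₂₁) (hb₂₃ : b₂₃ = matVec R₂ᵀ s₂₃)
    (hb₁₂₃ : b₁₂₃ = cross3 b₁₂ b₁₃) (hb₂₁₃ : b₂₁₃ = cross3 b₂₁ b₂₃)
    (a₁₂ : ℝ) (ha₁₂ : a₁₂ = ‖b₂₁₃‖ * ‖b₁₂₃‖)
    (Qd₁₂ Qd₂₁ : M3) (hQd : SO3 Qd₁₂) (hQd₂₁ : Qd₂₁ = Qd₁₂ᵀ)
    (kα kβ : ℝ) (hkα : 0 < kα) (hkβ : 0 < kβ)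
    (Ψ : ℝ)
    (hΨ : Ψ = kα * (1 + dot3 b₂₁ (matVec Qd₁₂ b₁₂))
        + kβ * (1 + a₁₂⁻¹ * dot3 b₂₁₃ (matVec Qd₁₂ b₁₂₃)))
    (K : M3)
    (hK : K = kα • vecMulVec s₁₂ s₁₂ + (kβ / ‖s₁₂₃‖ ^ 2) • vecMulVec s₁₂₃ s₁₂₃) :
    Ψ = kα + kβ - Matrix.trace (R₂ᵀ * K * R₁ * Qd₂₁) :=
  error_function_trace_form_general s₁₂ s₁₃ s₂₁ s₂₃ hopp s₁₂₃ s₂₁₃ hs₁₂₃ hs₂₁₃ h₁ h₂ hnormal R₁ R₂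
    hR₁ hR₂ b₁₂ b₁₃ b₂₁ b₂₃ b₁₂₃ b₂₁₃ hb₁₂ hb₁₃ hb₂₁ hb₂₃ hb₁₂₃ hb₂₁₃ a₁₂ ha₁₂ Qd₁₂ Qd₂₁ hQd₂₁ kα kβ
    Ψ hΨ K hK
end
end

section
/- Let f₁, f₂, f₃ ≥ 0, F = diag(f₁, f₂, f₃), and P ∈ SO(3). Define Φ = (1/2) tr[F(I − P)] and e_P = (1/2)(FP − PᵀF)^∨, and let h₁ = min{f₁+f₂, f₂+f₃, f₃+f₁}, h₄ = max{f₁+f₂, f₂+f₃, f₃+f₁}, h₅ = min{(f₁+f₂)², (f₂+f₃)², (f₃+f₁)²}. If h₁ > 0 and Φ ≤ φ for a constant φ < h₁, then Φ ≤ (h₁h₄/(h₅(h₁ − φ))) ‖e_P‖². -/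
noncomputable section
open Matrix

attribute [local instance] Matrix.normedAddCommGroup Matrix.normedSpace

/-!
Write `P` as the rotation of a unit quaternion `q = (q₀, q₁, q₂, q₃)`; the squares `qᵢ²` and
the products `qᵢqⱼ` are linear in the entries of `P`, so no square roots are needed. With
`s = q₁² + q₂² + q₃² = 1 - q₀²` one finds `Φ = Σ (fⱼ + fₖ) qᵢ²`, hence `h₁ s ≤ Φ ≤ h₄ s`, and
`‖e_P‖² = q₀² Σ (fⱼ + fₖ)² qᵢ² + Σ (fₖ - fⱼ)² qⱼ² qₖ² ≥ h₅ s (1 - s)`. On the sublevel set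
`Φ ≤ φ < h₁` the first estimate gives `1 - s ≥ (h₁ - φ) / h₁`, and the bound follows.
-/

theorem nonneg_of_pairwise_mul_nonneg {ι : Type*} [Fintype ι] {w : ι → ℝ}
    (hmul : ∀ i j, i ≠ j → 0 ≤ w i * w j) (hsum : 0 < ∑ i, w i) (i : ι) : 0 ≤ w i := by
  by_contra! hi
  have hnonpos : ∀ j, w j ≤ 0 := fun j ↦ by
    rcases eq_or_ne i j with rfl | hij
    · exact hi.le
    · exact nonpos_of_mul_nonneg_right (hmul i j hij) hi
  exact hsum.not_ge (Finset.sum_nonpos fun j _ ↦ hnonpos j)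

theorem min_mul_add_le_add {a b c x y z : ℝ} (hx : 0 ≤ x) (hy : 0 ≤ y) (hz : 0 ≤ z) :
    min a (min b c) * (x + y + z) ≤ a * x + b * y + c * z := by
  have := mul_le_mul_of_nonneg_right (min_le_left a (min b c)) hx
  have := mul_le_mul_of_nonneg_right ((min_le_right a _).trans (min_le_left b c)) hy
  have := mul_le_mul_of_nonneg_right ((min_le_right a _).trans (min_le_right b c)) hz
  linarith

theorem add_le_max_mul_add {a b c x y z : ℝ} (hx : 0 ≤ x) (hy : 0 ≤ y) (hz : 0 ≤ z) :
    a * x + b * y + c * z ≤ max a (max b c) * (x + y + z) := by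
  have := mul_le_mul_of_nonneg_right (le_max_left a (max b c)) hx
  have := mul_le_mul_of_nonneg_right ((le_max_left b c).trans (le_max_right a _)) hy
  have := mul_le_mul_of_nonneg_right ((le_max_right b c).trans (le_max_right a _)) hz
  linarith

theorem le_div_mul_of_sandwich {Φ E s h₁ h₄ h₅ φ : ℝ} (hh₁ : 0 < h₁) (hh₁₄ : h₁ ≤ h₄)
    (hh₅ : 0 < h₅) (hs : 0 ≤ s) (hΦ_ge : h₁ * s ≤ Φ) (hΦ_le : Φ ≤ h₄ * s)
    (hE : h₅ * s * (1 - s) ≤ E) (hφ : φ < h₁) (hΦφ : Φ ≤ φ) :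
    Φ ≤ h₁ * h₄ / (h₅ * (h₁ - φ)) * E := by
  have hgap : h₁ - φ ≤ h₁ * (1 - s) := by linarith
  have key : Φ * (h₁ - φ) ≤ h₄ * s * (h₁ * (1 - s)) :=
    mul_le_mul hΦ_le hgap (by linarith) ((mul_nonneg hh₁.le hs).trans (hΦ_ge.trans hΦ_le))
  rw [div_mul_eq_mul_div, le_div_iff₀ (mul_pos hh₅ (by linarith))]
  calc Φ * (h₅ * (h₁ - φ)) = h₅ * (Φ * (h₁ - φ)) := by ring
    _ ≤ h₅ * (h₄ * s * (h₁ * (1 - s))) := by gcongr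
    _ = h₁ * h₄ * (h₅ * s * (1 - s)) := by ring
    _ ≤ h₁ * h₄ * E := mul_le_mul_of_nonneg_left hE (mul_nonneg hh₁.le (hh₁.le.trans hh₁₄))

/-- If `P` is the rotation matrix of the unit quaternion `q`, then `quatSq P i = q i ^ 2`. -/
def quatSq (P : M3) : Fin 4 → ℝ :=
  ![(1 + P 0 0 + P 1 1 + P 2 2) / 4, (1 + P 0 0 - P 1 1 - P 2 2) / 4,
    (1 - P 0 0 + P 1 1 - P 2 2) / 4, (1 - P 0 0 - P 1 1 + P 2 2) / 4]

theorem quatSq_sum (P : M3) : quatSq P 0 + quatSq P 1 + quatSq P 2 + quatSq P 3 = 1 := by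
  simp only [quatSq, cons_val_zero, cons_val_one, cons_val]
  ring

theorem half_trace_diagonal_mul_one_sub_eq_quatSq (a b c : ℝ) (P : M3) :
    (1 / 2) * trace (diagonal ![a, b, c] * (1 - P)) =
      (a + b) * quatSq P 3 + (b + c) * quatSq P 1 + (c + a) * quatSq P 2 := by
  simp only [trace_fin_three, mul_apply, Fin.sum_univ_three, Matrix.sub_apply, one_apply_eq,
    one_apply_ne, diagonal_apply_eq, diagonal_apply_ne, ne_eq, Fin.reduceEq, not_false_eq_true,
    cons_val_zero, cons_val_one, cons_val, quatSq]
  ring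

theorem norm_sq_half_vee_diagonal_mul_sub (a b c : ℝ) (P : M3) :
    ‖(1 / 2 : ℝ) • vee (diagonal ![a, b, c] * P - Pᵀ * diagonal ![a, b, c])‖ ^ 2 =
      ((c * P 2 1 - b * P 1 2) / 2) ^ 2 + ((a * P 0 2 - c * P 2 0) / 2) ^ 2 +
        ((b * P 1 0 - a * P 0 1) / 2) ^ 2 := by
  rw [EuclideanSpace.real_norm_sq_eq]
  simp only [vee, PiLp.smul_apply, smul_eq_mul, Matrix.sub_apply, mul_apply, Fin.sum_univ_three,
    transpose_apply, diagonal_apply_eq, diagonal_apply_ne, ne_eq, Fin.reduceEq, not_false_eq_true,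
    cons_val_zero, cons_val_one, cons_val]
  ring

namespace SO3

variable {P : M3}

theorem mul_transpose (hP : SO3 P) : P * Pᵀ = 1 := mul_eq_one_comm.mp hP.1

theorem adjugate_eq_transpose (hP : SO3 P) : adjugate P = Pᵀ :=
  calc adjugate P = adjugate P * (P * Pᵀ) := by rw [hP.mul_transpose, mul_one]
    _ = Pᵀ := by rw [← mul_assoc, adjugate_mul, hP.2, one_smul, one_mul]

theorem sum_sq_row (hP : SO3 P) (i : Fin 3) : P i 0 ^ 2 + P i 1 ^ 2 + P i 2 ^ 2 = 1 := by
  simpa [mul_apply, Fin.sum_univ_three, sq] using congrFun₂ hP.mul_transpose i i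

theorem sum_sq_col (hP : SO3 P) (j : Fin 3) : P 0 j ^ 2 + P 1 j ^ 2 + P 2 j ^ 2 = 1 := by
  simpa [mul_apply, Fin.sum_univ_three, sq] using congrFun₂ hP.1 j j

theorem cofactor_diag (hP : SO3 P) :
    P 1 1 * P 2 2 - P 1 2 * P 2 1 = P 0 0 ∧ P 0 0 * P 2 2 - P 0 2 * P 2 0 = P 1 1 ∧
      P 0 0 * P 1 1 - P 0 1 * P 1 0 = P 2 2 := by
  have h := congrFun₂ hP.adjugate_eq_transpose
  refine ⟨?_, ?_, ?_⟩
  · simpa [adjugate_fin_three] using h 0 0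
  · simpa [adjugate_fin_three] using h 1 1
  · simpa [adjugate_fin_three] using h 2 2

/-- The right-hand sides are the squares of the products `q i * q j`, which are linear in the
off-diagonal entries of `P`. -/
theorem quatSq_mul_quatSq (hP : SO3 P) :
    quatSq P 0 * quatSq P 1 = ((P 2 1 - P 1 2) / 4) ^ 2 ∧
    quatSq P 0 * quatSq P 2 = ((P 0 2 - P 2 0) / 4) ^ 2 ∧
    quatSq P 0 * quatSq P 3 = ((P 1 0 - P 0 1) / 4) ^ 2 ∧
    quatSq P 2 * quatSq P 3 = ((P 2 1 + P 1 2) / 4) ^ 2 ∧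
    quatSq P 3 * quatSq P 1 = ((P 0 2 + P 2 0) / 4) ^ 2 ∧
    quatSq P 1 * quatSq P 2 = ((P 1 0 + P 0 1) / 4) ^ 2 := by
  obtain ⟨k0, k1, k2⟩ := hP.cofactor_diag
  have r0 := hP.sum_sq_row 0
  have r1 := hP.sum_sq_row 1
  have r2 := hP.sum_sq_row 2
  have c0 := hP.sum_sq_col 0
  have c1 := hP.sum_sq_col 1
  have c2 := hP.sum_sq_col 2
  simp only [quatSq, Matrix.cons_val]
  refine ⟨?_, ?_, ?_, ?_, ?_, ?_⟩
  · linear_combination (-1/8) * k0 - (1/16) * r1 - (1/16) * r2 + (1/16) * c0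
  · linear_combination (-1/8) * k1 - (1/16) * r2 - (1/16) * r0 + (1/16) * c1
  · linear_combination (-1/8) * k2 - (1/16) * r0 - (1/16) * r1 + (1/16) * c2
  · linear_combination (1/8) * k0 - (1/16) * r1 - (1/16) * r2 + (1/16) * c0
  · linear_combination (1/8) * k1 - (1/16) * r2 - (1/16) * r0 + (1/16) * c1
  · linear_combination (1/8) * k2 - (1/16) * r0 - (1/16) * r1 + (1/16) * c2

theorem quatSq_nonneg (hP : SO3 P) (i : Fin 4) : 0 ≤ quatSq P i := by
  have hsum : 0 < ∑ i, quatSq P i := by rw [Fin.sum_univ_four, quatSq_sum]; exact one_pos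
  refine nonneg_of_pairwise_mul_nonneg (fun i j hij ↦ ?_) hsum i
  obtain ⟨h01, h02, h03, h23, h31, h12⟩ := hP.quatSq_mul_quatSq
  fin_cases i <;> fin_cases j <;>
    simp only [Fin.zero_eta, Fin.mk_one, Fin.reduceFinMk, ne_eq, not_true_eq_false] at hij ⊢ <;>
    nlinarith

theorem norm_sq_half_vee_diagonal_mul_sub_eq_quatSq (hP : SO3 P) (a b c : ℝ) :
    ‖(1 / 2 : ℝ) • vee (diagonal ![a, b, c] * P - Pᵀ * diagonal ![a, b, c])‖ ^ 2 =
      quatSq P 0 * ((a + b) ^ 2 * quatSq P 3 + (b + c) ^ 2 * quatSq P 1 +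
          (c + a) ^ 2 * quatSq P 2) +
        ((c - b) ^ 2 * (quatSq P 2 * quatSq P 3) + (a - c) ^ 2 * (quatSq P 3 * quatSq P 1) +
          (b - a) ^ 2 * (quatSq P 1 * quatSq P 2)) := by
  obtain ⟨h01, h02, h03, h23, h31, h12⟩ := hP.quatSq_mul_quatSq
  rw [norm_sq_half_vee_diagonal_mul_sub]
  -- The cross terms cancel since `q₀q₁q₂q₃` is read off in three ways:
  -- `P₂₁² - P₁₂² = P₀₂² - P₂₀² = P₁₀² - P₀₁²`.
  linear_combination (-(b + c) ^ 2) * h01 - (c + a) ^ 2 * h02 - (a + b) ^ 2 * h03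
    - (c - b) ^ 2 * h23 - (a - c) ^ 2 * h31 - (b - a) ^ 2 * h12
    + (a ^ 2 - c ^ 2) / 8 * (hP.sum_sq_col 2 - hP.sum_sq_row 2)
    + (b ^ 2 - a ^ 2) / 8 * (hP.sum_sq_row 1 - hP.sum_sq_col 1)

end SO3

theorem Phi_upper_bound_general
    (f₁ f₂ f₃ : ℝ)
    (F : M3) (hF : F = Matrix.diagonal ![f₁, f₂, f₃])
    (P : M3) (hP : SO3 P)
    (Φ : ℝ) (hΦ : Φ = (1 / 2) * Matrix.trace (F * (1 - P)))
    (eP : V3) (heP : eP = (1 / 2 : ℝ) • vee (F * P - Pᵀ * F))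
    (h₁ h₄ h₅ : ℝ)
    (hh₁ : h₁ = min (f₁ + f₂) (min (f₂ + f₃) (f₃ + f₁)))
    (hh₄ : h₄ = max (f₁ + f₂) (max (f₂ + f₃) (f₃ + f₁)))
    (hh₅ : h₅ = min ((f₁ + f₂) ^ 2) (min ((f₂ + f₃) ^ 2) ((f₃ + f₁) ^ 2)))
    (hh₁pos : 0 < h₁)
    (φ : ℝ) (hφ : φ < h₁) (hΦφ : Φ ≤ φ) :
    Φ ≤ (h₁ * h₄ / (h₅ * (h₁ - φ))) * ‖eP‖ ^ 2 := by
  subst hF hΦ heP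
  rw [half_trace_diagonal_mul_one_sub_eq_quatSq] at hΦφ ⊢
  rw [hP.norm_sq_half_vee_diagonal_mul_sub_eq_quatSq]
  have hw := hP.quatSq_nonneg
  have hsum := quatSq_sum P
  set w := quatSq P
  obtain ⟨h₁₂, h₂₃, h₃₁⟩ : 0 < f₁ + f₂ ∧ 0 < f₂ + f₃ ∧ 0 < f₃ + f₁ := by
    simpa only [hh₁, lt_min_iff] using hh₁pos
  refine le_div_mul_of_sandwich (s := w 3 + w 1 + w 2) hh₁pos
    (hh₁ ▸ hh₄ ▸ (min_le_left _ _).trans (le_max_left _ _))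
    (hh₅ ▸ lt_min (pow_pos h₁₂ 2) (lt_min (pow_pos h₂₃ 2) (pow_pos h₃₁ 2)))
    (by linarith [hw 1, hw 2, hw 3]) (hh₁ ▸ min_mul_add_le_add (hw 3) (hw 1) (hw 2))
    (hh₄ ▸ add_le_max_mul_add (hw 3) (hw 1) (hw 2)) ?_ hφ hΦφ
  calc h₅ * (w 3 + w 1 + w 2) * (1 - (w 3 + w 1 + w 2))
      = w 0 * (h₅ * (w 3 + w 1 + w 2)) := by rw [← hsum]; ring
    _ ≤ w 0 * ((f₁ + f₂) ^ 2 * w 3 + (f₂ + f₃) ^ 2 * w 1 + (f₃ + f₁) ^ 2 * w 2) :=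
      mul_le_mul_of_nonneg_left (hh₅ ▸ min_mul_add_le_add (hw 3) (hw 1) (hw 2)) (hw 0)
    _ ≤ _ := le_add_of_nonneg_right (by have := hw 1; have := hw 2; have := hw 3; positivity)

/-- upper quadratic bound of the error function Φ on SO(3),
on the sublevel set Φ ≤ φ < h₁. -/
theorem Phi_upper_bound
    (f₁ f₂ f₃ : ℝ) (hf₁ : 0 ≤ f₁) (hf₂ : 0 ≤ f₂) (hf₃ : 0 ≤ f₃)
    (F : M3) (hF : F = Matrix.diagonal ![f₁, f₂, f₃])
    (P : M3) (hP : SO3 P)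
    (Φ : ℝ) (hΦ : Φ = (1 / 2) * Matrix.trace (F * (1 - P)))
    (eP : V3) (heP : eP = (1 / 2 : ℝ) • vee (F * P - Pᵀ * F))
    (h₁ h₄ h₅ : ℝ)
    (hh₁ : h₁ = min (f₁ + f₂) (min (f₂ + f₃) (f₃ + f₁)))
    (hh₄ : h₄ = max (f₁ + f₂) (max (f₂ + f₃) (f₃ + f₁)))
    (hh₅ : h₅ = min ((f₁ + f₂) ^ 2) (min ((f₂ + f₃) ^ 2) ((f₃ + f₁) ^ 2)))
    (hh₁pos : 0 < h₁)
    (φ : ℝ) (hφ : φ < h₁) (hΦφ : Φ ≤ φ) :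
    Φ ≤ (h₁ * h₄ / (h₅ * (h₁ - φ))) * ‖eP‖ ^ 2 :=
  Phi_upper_bound_general f₁ f₂ f₃ F hF P hP Φ hΦ eP heP h₁ h₄ h₅ hh₁ hh₄ hh₅ hh₁pos φ hφ hΦφ
end
end

section
/- Along trajectories of the attitude kinematics, the configuration error function satisfies d/dt Ψ₁₂ = e₁₂ · e_{Ω₁} + e₂₁ · e_{Ω₂}, where e_{Ωᵢ}(t) = Ωᵢ(t) − Ω^dᵢ(t). -/
noncomputable section
open Matrix

attribute [local instance] Matrix.normedAddCommGroup Matrix.normedSpace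

/-! Body-frame vectors `b = Rᵀ s` rotate as `ḃ = b × Ω`, and by the Jacobi identity so does the
cross product of two vectors rotating with the same `Ω`. Since `Rᵀ` is an isometry, `a₁₂` is
constant, so `Ψ₁₂` is an affine combination of two terms `u · Q v` with `u`, `v` rotating; the
derivative of each is a sum of scalar triple products, which regroup into `e₁₂` and `e₂₁`. -/

section BilinearDeriv

variable {E F G : Type*} [NormedAddCommGroup E] [NormedSpace ℝ E] [FiniteDimensional ℝ E]
  [NormedAddCommGroup F] [NormedSpace ℝ F] [FiniteDimensional ℝ F]
  [NormedAddCommGroup G] [NormedSpace ℝ G]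

theorem LinearMap.hasDerivAt_of_bilinear (B : E →ₗ[ℝ] F →ₗ[ℝ] G) {u : ℝ → E} {v : ℝ → F}
    {u' : E} {v' : F} {t : ℝ} (hu : HasDerivAt u u' t) (hv : HasDerivAt v v' t) :
    HasDerivAt (fun s => B (u s) (v s)) (B (u t) v' + B u' (v t)) t :=
  (LinearMap.toContinuousLinearMap
    (LinearMap.toContinuousLinearMap.toLinearMap ∘ₗ B)).hasDerivAt_of_bilinear
    (fun _ => hu) (fun _ => hv)

end BilinearDeriv

theorem HasDerivAt.matrix_transpose {m n : Type*} [Fintype m] [Fintype n]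
    {A : ℝ → Matrix m n ℝ} {A' : Matrix m n ℝ} {t : ℝ} (hA : HasDerivAt A A' t) :
    HasDerivAt (fun s => (A s)ᵀ) A'ᵀ t :=
  (LinearMap.toContinuousLinearMap
    (transposeLinearEquiv m n ℝ ℝ).toLinearMap).hasFDerivAt.comp_hasDerivAt t hA

theorem dot3_eq_dotProduct (u v : V3) : dot3 u v = u.ofLp ⬝ᵥ v.ofLp :=
  (vec3_dotProduct _ _).symm

theorem cross3_eq_crossProduct (u v : V3) : cross3 u v = WithLp.toLp 2 (u.ofLp ⨯₃ v.ofLp) := by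
  rw [cross3, cross_apply]

def dot3ₗ : V3 →ₗ[ℝ] V3 →ₗ[ℝ] ℝ :=
  LinearMap.mk₂ ℝ dot3
    (fun _ _ _ => by simp [dot3_eq_dotProduct, add_dotProduct])
    (fun _ _ _ => by simp [dot3_eq_dotProduct])
    (fun _ _ _ => by simp [dot3_eq_dotProduct, dotProduct_add])
    (fun _ _ _ => by simp [dot3_eq_dotProduct])

def cross3ₗ : V3 →ₗ[ℝ] V3 →ₗ[ℝ] V3 :=
  LinearMap.mk₂ ℝ cross3
    (fun _ _ _ => by simp [cross3_eq_crossProduct])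
    (fun _ _ _ => by simp [cross3_eq_crossProduct])
    (fun _ _ _ => by simp [cross3_eq_crossProduct])
    (fun _ _ _ => by simp [cross3_eq_crossProduct])

def matVecₗ : M3 →ₗ[ℝ] V3 →ₗ[ℝ] V3 :=
  LinearMap.mk₂ ℝ matVec
    (fun _ _ _ => by simp [matVec, add_mulVec])
    (fun _ _ _ => by simp [matVec, smul_mulVec])
    (fun _ _ _ => by simp [matVec, mulVec_add])
    (fun _ _ _ => by simp [matVec, mulVec_smul])

theorem hasDerivAt_dot3 {u v : ℝ → V3} {u' v' : V3} {t : ℝ} (hu : HasDerivAt u u' t)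
    (hv : HasDerivAt v v' t) :
    HasDerivAt (fun s => dot3 (u s) (v s)) (dot3 (u t) v' + dot3 u' (v t)) t :=
  dot3ₗ.hasDerivAt_of_bilinear hu hv

theorem hasDerivAt_cross3 {u v : ℝ → V3} {u' v' : V3} {t : ℝ} (hu : HasDerivAt u u' t)
    (hv : HasDerivAt v v' t) :
    HasDerivAt (fun s => cross3 (u s) (v s)) (cross3 (u t) v' + cross3 u' (v t)) t :=
  cross3ₗ.hasDerivAt_of_bilinear hu hv

theorem hasDerivAt_matVec {A : ℝ → M3} {v : ℝ → V3} {A' : M3} {v' : V3} {t : ℝ}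
    (hA : HasDerivAt A A' t) (hv : HasDerivAt v v' t) :
    HasDerivAt (fun s => matVec (A s) (v s)) (matVec (A t) v' + matVec A' (v t)) t :=
  matVecₗ.hasDerivAt_of_bilinear hA hv

theorem cross3_comm (u v : V3) : cross3 v u = -cross3 u v := by
  rw [cross3_eq_crossProduct, cross3_eq_crossProduct, ← cross_anticomm]
  rfl

theorem leibniz_cross3 (u v w : V3) :
    cross3 (cross3 u v) w = cross3 (cross3 u w) v + cross3 u (cross3 v w) := by
  simp only [cross3_eq_crossProduct, ← WithLp.toLp_add]
  rw [cross_cross, ← cross_anticomm v, neg_add_eq_sub]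

theorem dot3_cross3_self (u v : V3) :
    dot3 (cross3 u v) (cross3 u v) = dot3 u u * dot3 v v - dot3 u v ^ 2 := by
  simp only [dot3_eq_dotProduct, cross3_eq_crossProduct, cross_dot_cross,
    dotProduct_comm v.ofLp u.ofLp]
  ring

theorem dot3_self_eq_norm_sq (x : V3) : dot3 x x = ‖x‖ ^ 2 := by
  rw [EuclideanSpace.real_norm_sq_eq, Fin.sum_univ_three, dot3]
  ring

theorem hat_transpose (w : V3) : (hat w)ᵀ = -hat w := by
  ext i j
  fin_cases i <;> fin_cases j <;> simp [hat]

theorem matVec_hat (w x : V3) : matVec (hat w) x = cross3 w x := by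
  simp only [matVec, hat, cross3, cons_mulVec, empty_mulVec, vec3_dotProduct, cons_val_zero,
    cons_val_one, cons_val]
  congr 1
  exact vec3_eq (by ring) (by ring) (by ring)

theorem matVec_mul (A B : M3) (x : V3) : matVec (A * B) x = matVec A (matVec B x) := by
  simp [matVec, mulVec_mulVec]

theorem dot3_matVec_transpose_left (A : M3) (x y : V3) :
    dot3 (matVec Aᵀ x) y = dot3 x (matVec A y) := by
  simp only [dot3_eq_dotProduct, matVec, dotProduct_mulVec, mulVec_transpose, dotProduct_comm]

theorem dot3_matVec_transpose {A : M3} (hA : A * Aᵀ = 1) (x y : V3) :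
    dot3 (matVec Aᵀ x) (matVec Aᵀ y) = dot3 x y := by
  rw [dot3_matVec_transpose_left, ← matVec_mul, hA]
  simp [matVec]

theorem norm_cross3_matVec_transpose {A : M3} (hA : A * Aᵀ = 1) (x y : V3) :
    ‖cross3 (matVec Aᵀ x) (matVec Aᵀ y)‖ = ‖cross3 x y‖ := by
  rw [← sq_eq_sq₀ (norm_nonneg _) (norm_nonneg _), ← dot3_self_eq_norm_sq,
    ← dot3_self_eq_norm_sq, dot3_cross3_self, dot3_cross3_self, dot3_matVec_transpose hA,
    dot3_matVec_transpose hA, dot3_matVec_transpose hA]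

theorem hasDerivAt_matVec_transpose {R : ℝ → M3} {w : V3} {t : ℝ}
    (hR : HasDerivAt R (R t * hat w) t) (x : V3) :
    HasDerivAt (fun s => matVec (R s)ᵀ x) (cross3 (matVec (R t)ᵀ x) w) t := by
  refine (hasDerivAt_matVec hR.matrix_transpose (hasDerivAt_const t x)).congr_deriv ?_
  rw [transpose_mul, hat_transpose, matVec_mul, cross3_comm, ← matVec_hat]
  simp [matVec, neg_mulVec]

theorem hasDerivAt_cross3_of_rotating {u v : ℝ → V3} {w : V3} {t : ℝ}
    (hu : HasDerivAt u (cross3 (u t) w) t) (hv : HasDerivAt v (cross3 (v t) w) t) :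
    HasDerivAt (fun s => cross3 (u s) (v s)) (cross3 (cross3 (u t) (v t)) w) t :=
  (hasDerivAt_cross3 hu hv).congr_deriv <| by
    rw [leibniz_cross3 (u t) (v t) w, add_comm]

theorem hasDerivAt_dot3_matVec_of_rotating {u v : ℝ → V3} {Q : ℝ → M3} {w₁ w₂ d₁ d₂ : V3}
    {t : ℝ} (hu : HasDerivAt u (cross3 (u t) w₂) t) (hv : HasDerivAt v (cross3 (v t) w₁) t)
    (hQ : HasDerivAt Q (Q t * hat d₁ - hat d₂ * Q t) t) :
    HasDerivAt (fun s => dot3 (u s) (matVec (Q s) (v s)))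
      (dot3 (cross3 (matVec (Q t)ᵀ (u t)) (v t)) (w₁ - d₁)
        + dot3 (cross3 (matVec (Q t) (v t)) (u t)) (w₂ - d₂)) t :=
  (hasDerivAt_dot3 hu (hasDerivAt_matVec hQ hv)).congr_deriv <| by
    simp only [dot3, cross3, matVec, hat, mulVec, vec3_dotProduct, mul_apply, Fin.sum_univ_three,
      Matrix.sub_apply, transpose_apply, PiLp.add_apply, PiLp.sub_apply, of_apply, cons_val',
      cons_val_zero, cons_val_one, cons_val, cons_val_fin_one]
    ring

theorem error_function_derivative_general
    (s₁₂ s₁₃ s₂₁ s₂₃ : V3)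
    (Ω₁ Ω₂ Ωd₁ Ωd₂ : ℝ → V3)
    (R₁ R₂ Qd₁₂ : ℝ → M3)
    (hR₁SO : ∀ t, SO3 (R₁ t)) (hR₂SO : ∀ t, SO3 (R₂ t))
    (hR₁ : ∀ t, HasDerivAt R₁ (R₁ t * hat (Ω₁ t)) t)
    (hR₂ : ∀ t, HasDerivAt R₂ (R₂ t * hat (Ω₂ t)) t)
    (hQd : ∀ t, HasDerivAt Qd₁₂ (Qd₁₂ t * hat (Ωd₁ t) - hat (Ωd₂ t) * Qd₁₂ t) t)
    (Qd₂₁ : ℝ → M3) (hQd₂₁ : ∀ t, Qd₂₁ t = (Qd₁₂ t)ᵀ)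
    (b₁₂ b₁₃ b₂₁ b₂₃ b₁₂₃ b₂₁₃ : ℝ → V3)
    (hb₁₂ : ∀ t, b₁₂ t = matVec (R₁ t)ᵀ s₁₂) (hb₁₃ : ∀ t, b₁₃ t = matVec (R₁ t)ᵀ s₁₃)
    (hb₂₁ : ∀ t, b₂₁ t = matVec (R₂ t)ᵀ s₂₁) (hb₂₃ : ∀ t, b₂₃ t = matVec (R₂ t)ᵀ s₂₃)
    (hb₁₂₃ : ∀ t, b₁₂₃ t = cross3 (b₁₂ t) (b₁₃ t))
    (hb₂₁₃ : ∀ t, b₂₁₃ t = cross3 (b₂₁ t) (b₂₃ t))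
    (a₁₂ : ℝ → ℝ) (ha₁₂ : ∀ t, a₁₂ t = ‖b₂₁₃ t‖ * ‖b₁₂₃ t‖)
    (kα kβ : ℝ)
    (e₁₂ : ℝ → V3)
    (he₁₂ : ∀ t, e₁₂ t = kα • cross3 (matVec (Qd₂₁ t) (b₂₁ t)) (b₁₂ t)
        + (kβ / a₁₂ t) • cross3 (matVec (Qd₂₁ t) (b₂₁₃ t)) (b₁₂₃ t))
    (e₂₁ : ℝ → V3)
    (he₂₁ : ∀ t, e₂₁ t = kα • cross3 (matVec (Qd₁₂ t) (b₁₂ t)) (b₂₁ t)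
        + (kβ / a₁₂ t) • cross3 (matVec (Qd₁₂ t) (b₁₂₃ t)) (b₂₁₃ t))
    (Ψ : ℝ → ℝ)
    (hΨ : ∀ t, Ψ t = kα * (1 + dot3 (b₂₁ t) (matVec (Qd₁₂ t) (b₁₂ t)))
        + kβ * (1 + (a₁₂ t)⁻¹ * dot3 (b₂₁₃ t) (matVec (Qd₁₂ t) (b₁₂₃ t)))) :
    ∀ t, HasDerivAt Ψ
      (dot3 (e₁₂ t) (Ω₁ t - Ωd₁ t) + dot3 (e₂₁ t) (Ω₂ t - Ωd₂ t)) t := by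
  intro t
  have hR₁T : ∀ s, R₁ s * (R₁ s)ᵀ = 1 := fun s => mul_eq_one_comm.mp (hR₁SO s).1
  have hR₂T : ∀ s, R₂ s * (R₂ s)ᵀ = 1 := fun s => mul_eq_one_comm.mp (hR₂SO s).1
  have ha : ∀ s, a₁₂ s = ‖cross3 s₂₁ s₂₃‖ * ‖cross3 s₁₂ s₁₃‖ := fun s => by
    rw [ha₁₂, hb₂₁₃, hb₁₂₃, hb₁₂, hb₁₃, hb₂₁, hb₂₃, norm_cross3_matVec_transpose (hR₂T s),
      norm_cross3_matVec_transpose (hR₁T s)]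
  obtain rfl : b₁₂ = _ := funext hb₁₂
  obtain rfl : b₁₃ = _ := funext hb₁₃
  obtain rfl : b₂₁ = _ := funext hb₂₁
  obtain rfl : b₂₃ = _ := funext hb₂₃
  obtain rfl : b₁₂₃ = _ := funext hb₁₂₃
  obtain rfl : b₂₁₃ = _ := funext hb₂₁₃
  obtain rfl : Ψ = _ := funext hΨ
  simp only [ha] at he₁₂ he₂₁ ⊢
  have dR₁ := hasDerivAt_matVec_transpose (hR₁ t)
  have dR₂ := hasDerivAt_matVec_transpose (hR₂ t)
  have hF := hasDerivAt_dot3_matVec_of_rotating (dR₂ s₂₁) (dR₁ s₁₂) (hQd t)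
  have hG := hasDerivAt_dot3_matVec_of_rotating
    (hasDerivAt_cross3_of_rotating (dR₂ s₂₁) (dR₂ s₂₃))
    (hasDerivAt_cross3_of_rotating (dR₁ s₁₂) (dR₁ s₁₃)) (hQd t)
  refine (((hF.const_add 1).const_mul kα).add
    (((hG.const_mul _).const_add 1).const_mul kβ)).congr_deriv ?_
  rw [he₁₂, he₂₁, hQd₂₁]
  simp only [dot3, PiLp.add_apply, PiLp.smul_apply, smul_eq_mul, div_eq_mul_inv]
  ring

/-- derivative of the configuration error function. -/
theorem error_function_derivative
    (s₁₂ s₁₃ s₂₁ s₂₃ : V3)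
    (hs₁₂ : ‖s₁₂‖ = 1) (hs₁₃ : ‖s₁₃‖ = 1) (hs₂₁ : ‖s₂₁‖ = 1) (hs₂₃ : ‖s₂₃‖ = 1)
    (hopp : s₁₂ = -s₂₁)
    (s₁₂₃ s₂₁₃ : V3) (hs₁₂₃ : s₁₂₃ = cross3 s₁₂ s₁₃) (hs₂₁₃ : s₂₁₃ = cross3 s₂₁ s₂₃)
    (h₁ : s₁₂₃ ≠ 0) (h₂ : s₂₁₃ ≠ 0)
    (hnormal : ‖s₂₁₃‖⁻¹ • s₂₁₃ = -(‖s₁₂₃‖⁻¹ • s₁₂₃))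
    (Ω₁ Ω₂ Ωd₁ Ωd₂ : ℝ → V3)
    (hΩ₁ : Continuous Ω₁) (hΩ₂ : Continuous Ω₂)
    (hΩd₁ : Continuous Ωd₁) (hΩd₂ : Continuous Ωd₂)
    (R₁ R₂ Qd₁₂ : ℝ → M3)
    (hR₁SO : ∀ t, SO3 (R₁ t)) (hR₂SO : ∀ t, SO3 (R₂ t)) (hQdSO : ∀ t, SO3 (Qd₁₂ t))
    (hR₁ : ∀ t, HasDerivAt R₁ (R₁ t * hat (Ω₁ t)) t)
    (hR₂ : ∀ t, HasDerivAt R₂ (R₂ t * hat (Ω₂ t)) t)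
    (hQd : ∀ t, HasDerivAt Qd₁₂ (Qd₁₂ t * hat (Ωd₁ t) - hat (Ωd₂ t) * Qd₁₂ t) t)
    (Qd₂₁ : ℝ → M3) (hQd₂₁ : ∀ t, Qd₂₁ t = (Qd₁₂ t)ᵀ)
    (b₁₂ b₁₃ b₂₁ b₂₃ b₁₂₃ b₂₁₃ : ℝ → V3)
    (hb₁₂ : ∀ t, b₁₂ t = matVec (R₁ t)ᵀ s₁₂) (hb₁₃ : ∀ t, b₁₃ t = matVec (R₁ t)ᵀ s₁₃)
    (hb₂₁ : ∀ t, b₂₁ t = matVec (R₂ t)ᵀ s₂₁) (hb₂₃ : ∀ t, b₂₃ t = matVec (R₂ t)ᵀ s₂₃)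
    (hb₁₂₃ : ∀ t, b₁₂₃ t = cross3 (b₁₂ t) (b₁₃ t))
    (hb₂₁₃ : ∀ t, b₂₁₃ t = cross3 (b₂₁ t) (b₂₃ t))
    (a₁₂ : ℝ → ℝ) (ha₁₂ : ∀ t, a₁₂ t = ‖b₂₁₃ t‖ * ‖b₁₂₃ t‖)
    (kα kβ : ℝ) (hkα : 0 < kα) (hkβ : 0 < kβ)
    (e₁₂ : ℝ → V3)
    (he₁₂ : ∀ t, e₁₂ t = kα • cross3 (matVec (Qd₂₁ t) (b₂₁ t)) (b₁₂ t)
        + (kβ / a₁₂ t) • cross3 (matVec (Qd₂₁ t) (b₂₁₃ t)) (b₁₂₃ t))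
    (e₂₁ : ℝ → V3)
    (he₂₁ : ∀ t, e₂₁ t = kα • cross3 (matVec (Qd₁₂ t) (b₁₂ t)) (b₂₁ t)
        + (kβ / a₁₂ t) • cross3 (matVec (Qd₁₂ t) (b₁₂₃ t)) (b₂₁₃ t))
    (Ψ : ℝ → ℝ)
    (hΨ : ∀ t, Ψ t = kα * (1 + dot3 (b₂₁ t) (matVec (Qd₁₂ t) (b₁₂ t)))
        + kβ * (1 + (a₁₂ t)⁻¹ * dot3 (b₂₁₃ t) (matVec (Qd₁₂ t) (b₁₂₃ t)))) :
    ∀ t, HasDerivAt Ψ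
      (dot3 (e₁₂ t) (Ω₁ t - Ωd₁ t) + dot3 (e₂₁ t) (Ω₂ t - Ωd₂ t)) t :=
  error_function_derivative_general s₁₂ s₁₃ s₂₁ s₂₃ Ω₁ Ω₂ Ωd₁ Ωd₂ R₁ R₂ Qd₁₂ hR₁SO hR₂SO hR₁ hR₂ hQd
    Qd₂₁ hQd₂₁ b₁₂ b₁₃ b₂₁ b₂₃ b₁₂₃ b₂₁₃ hb₁₂ hb₁₃ hb₂₁ hb₂₃ hb₁₂₃ hb₂₁₃ a₁₂ ha₁₂ kα kβ e₁₂ he₁₂ e₂₁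
    he₂₁ Ψ hΨ
end
end
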